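/- arXiv:2605.11831 — 4 statements merged into one kernel-verified Lean document; each statement's English description precedes it below -/
import Mathlib

section
/- Let P be a polynomial with real coefficients, all of whose zeros lie in the open left half-plane (negative real part), and write P(z) = E(z^2) + z·O(z^2) for real polynomials E and O (the even and odd parts of P). Then all zeros of E and all zeros of O are real and nonpositive. -/
open Polynomial

private lemma hb_sum_split (f : ℕ → ℂ) : ∀ N : ℕ,
    ∑ i ∈ Finset.range (2 * N), f i
      = ∑ k ∈ Finset.range N, f (2 * k) + ∑ k ∈ Finset.range N, f (2 * k + 1)
  | 0 => by simp
  | (N + 1) => by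
      have h2 : 2 * (N + 1) = (2 * N) + 1 + 1 := by ring
      rw [h2, Finset.sum_range_succ, Finset.sum_range_succ, hb_sum_split f N,
        Finset.sum_range_succ, Finset.sum_range_succ]
      ring

private lemma hb_prod_lt {f g : ℂ → ℝ} : ∀ (s : Multiset ℂ),
    (∀ x ∈ s, 0 ≤ f x ∧ f x < g x) →
    (s.map f).prod ≤ (s.map g).prod ∧ (s ≠ 0 → (s.map f).prod < (s.map g).prod) := by
  intro s
  induction s using Multiset.induction with
  | empty => simp
  | cons a s ih =>
    intro h
    have ha := h a (Multiset.mem_cons_self a s)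
    have hs : ∀ x ∈ s, 0 ≤ f x ∧ f x < g x := fun x hx => h x (Multiset.mem_cons_of_mem hx)
    obtain ⟨hle, _⟩ := ih hs
    have hfprod : 0 ≤ (s.map f).prod := Multiset.prod_nonneg (by
      intro x hx
      obtain ⟨y, hy, rfl⟩ := Multiset.mem_map.mp hx
      exact (hs y hy).1)
    have hgpos : 0 < (s.map g).prod := Multiset.prod_pos (by
      intro x hx
      obtain ⟨y, hy, rfl⟩ := Multiset.mem_map.mp hx
      exact lt_of_le_of_lt (hs y hy).1 (hs y hy).2)
    have hstrict : f a * (s.map f).prod < g a * (s.map g).prod :=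
      calc f a * (s.map f).prod ≤ f a * (s.map g).prod :=
              mul_le_mul_of_nonneg_left hle ha.1
        _ < g a * (s.map g).prod := mul_lt_mul_of_pos_right ha.2 hgpos
    refine ⟨?_, fun _ => ?_⟩ <;> simp only [Multiset.map_cons, Multiset.prod_cons]
    · exact le_of_lt hstrict
    · exact hstrict

private lemma hb_eval_conj (P : Polynomial ℝ) (z : ℂ) :
    (P.map (algebraMap ℝ ℂ)).eval ((starRingEnd ℂ) z)
      = (starRingEnd ℂ) ((P.map (algebraMap ℝ ℂ)).eval z) := by
  rw [Polynomial.eval_map, Polynomial.eval_map, ← Polynomial.aeval_def, ← Polynomial.aeval_def]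
  have := Polynomial.aeval_algHom_apply (Complex.conjAe.toAlgHom) z P
  simpa using this

private lemma hb_abs_eval_neg_lt (P : Polynomial ℝ) (hdeg : 1 ≤ P.degree)
    (hroots : ∀ z : ℂ, (P.map (algebraMap ℝ ℂ)).eval z = 0 → z.re < 0)
    {z : ℂ} (hz : 0 < z.re) :
    ‖(P.map (algebraMap ℝ ℂ)).eval (-z)‖
      < ‖(P.map (algebraMap ℝ ℂ)).eval z‖ := by
  set Q := P.map (algebraMap ℝ ℂ) with hQ
  have hP0 : P ≠ 0 := fun h => by simp [h] at hdeg
  have hQ0 : Q ≠ 0 := (Polynomial.map_ne_zero_iff (algebraMap ℝ ℂ).injective).mpr hP0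
  have hsplits : Q.Splits := IsAlgClosed.splits Q
  have hfac := hsplits.eq_prod_roots
  have hcard : Q.roots.card = Q.natDegree := (Polynomial.splits_iff_card_roots).mp hsplits
  have hdegQ : 1 ≤ Q.degree := by
    rwa [hQ, Polynomial.degree_map_eq_of_injective (algebraMap ℝ ℂ).injective]
  have hnd : 0 < Q.natDegree := Polynomial.natDegree_pos_iff_degree_pos.mpr
    (lt_of_lt_of_le (by norm_num) hdegQ)
  have hne : Q.roots ≠ 0 := by
    intro h
    rw [h] at hcard
    simp at hcard
    omega
  -- evaluation formula
  have heval : ∀ w : ℂ, Q.eval w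
      = Q.leadingCoeff * (Q.roots.map (fun r => w - r)).prod := by
    intro w
    conv_lhs => rw [hfac]
    simp [Polynomial.eval_multiset_prod, Multiset.map_map, Function.comp_def]
  have habs : ∀ w : ℂ, ‖Q.eval w‖
      = ‖Q.leadingCoeff‖ * (Q.roots.map (fun r => ‖w - r‖)).prod := by
    intro w
    rw [heval w, norm_mul]
    congr 1
    have := map_multiset_prod (normHom : ℂ →*₀ ℝ) (Q.roots.map (fun r => w - r))
    simpa [Multiset.map_map, Function.comp_def] using this
  -- replace -z by -conj z using conjugation
  have hconj : ‖Q.eval (-z)‖ = ‖Q.eval (-(starRingEnd ℂ) z)‖ := by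
    have : (-(starRingEnd ℂ) z) = (starRingEnd ℂ) (-z) := by simp
    rw [this, hQ, hb_eval_conj, Complex.norm_conj]
  -- factorwise strict inequality
  have hfactor : ∀ r ∈ Q.roots, 0 ≤ ‖-(starRingEnd ℂ) z - r‖
      ∧ ‖-(starRingEnd ℂ) z - r‖ < ‖z - r‖ := by
    intro r hr
    have hr0 : Q.eval r = 0 := (Polynomial.mem_roots hQ0).mp hr
    have hre : r.re < 0 := hroots r hr0
    refine ⟨norm_nonneg _, ?_⟩
    rw [Complex.norm_def, Complex.norm_def]
    apply Real.sqrt_lt_sqrt (Complex.normSq_nonneg _)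
    simp only [Complex.normSq_apply, Complex.sub_re, Complex.sub_im, Complex.neg_re,
      Complex.neg_im, Complex.conj_re, Complex.conj_im]
    nlinarith [mul_pos hz (neg_pos.mpr hre)]
  have hprod := hb_prod_lt Q.roots hfactor
  have hlead : 0 < ‖Q.leadingCoeff‖ := by
    simp [Polynomial.leadingCoeff_ne_zero.mpr hQ0]
  rw [hconj, habs, habs]
  exact mul_lt_mul_of_pos_left (hprod.2 hne) hlead

private lemma hb_eval_split (P E O : Polynomial ℝ)
    (hE : ∀ k, E.coeff k = P.coeff (2 * k))
    (hO : ∀ k, O.coeff k = P.coeff (2 * k + 1)) (z : ℂ) :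
    (P.map (algebraMap ℝ ℂ)).eval z
      = (E.map (algebraMap ℝ ℂ)).eval (z ^ 2) + z * (O.map (algebraMap ℝ ℂ)).eval (z ^ 2) := by
  set N := P.natDegree + 1 with hN
  have hEd : E.natDegree < N := Nat.lt_succ_of_le (Polynomial.natDegree_le_iff_coeff_eq_zero.mpr
    (by
      intro m hm
      rw [hE m]
      exact Polynomial.coeff_eq_zero_of_natDegree_lt (by omega)))
  have hOd : O.natDegree < N := Nat.lt_succ_of_le (Polynomial.natDegree_le_iff_coeff_eq_zero.mpr
    (by
      intro m hm
      rw [hO m]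
      exact Polynomial.coeff_eq_zero_of_natDegree_lt (by omega)))
  have hPd : (P.map (algebraMap ℝ ℂ)).natDegree < 2 * N := by
    have h : (P.map (algebraMap ℝ ℂ)).natDegree ≤ P.natDegree := Polynomial.natDegree_map_le
    omega
  have hEd' : (E.map (algebraMap ℝ ℂ)).natDegree < N :=
    lt_of_le_of_lt Polynomial.natDegree_map_le hEd
  have hOd' : (O.map (algebraMap ℝ ℂ)).natDegree < N :=
    lt_of_le_of_lt Polynomial.natDegree_map_le hOd
  rw [Polynomial.eval_eq_sum_range' hPd, Polynomial.eval_eq_sum_range' hEd',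
    Polynomial.eval_eq_sum_range' hOd', hb_sum_split, Finset.mul_sum]
  congr 1
  · apply Finset.sum_congr rfl
    intro k _
    rw [Polynomial.coeff_map, Polynomial.coeff_map, hE k, pow_mul]
  · apply Finset.sum_congr rfl
    intro k _
    rw [Polynomial.coeff_map, Polynomial.coeff_map, hO k, pow_succ, pow_mul]
    ring

private lemma hb_exists_sqrt (w : ℂ) (hw : ¬(w.im = 0 ∧ w.re ≤ 0)) :
    ∃ z : ℂ, 0 < z.re ∧ z ^ 2 = w := by
  obtain ⟨z, hz⟩ := IsAlgClosed.exists_pow_nat_eq w (n := 2) (by norm_num)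
  rcases lt_trichotomy z.re 0 with h | h | h
  · exact ⟨-z, by simpa using h, by rw [neg_pow]; simpa using hz⟩
  · exfalso
    apply hw
    rw [← hz, pow_two]
    constructor
    · simp [Complex.mul_im, h]
    · simp only [Complex.mul_re, h]
      nlinarith [mul_self_nonneg z.im]
  · exact ⟨z, h, hz⟩

/-- Hermite–Biehler consequence: if all complex zeros of a (non-constant) real
polynomial `P` lie in the open left half-plane, and `P(z) = E(z²) + z·O(z²)`
(even/odd parts), then all complex zeros of `E` and of `O` are real and
nonpositive. -/
theorem even_odd_parts_real_nonpositive_roots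
    (P E O : Polynomial ℝ) (hdeg : 1 ≤ P.degree)
    (hE : ∀ k, E.coeff k = P.coeff (2 * k))
    (hO : ∀ k, O.coeff k = P.coeff (2 * k + 1))
    (hroots : ∀ z : ℂ, (P.map (algebraMap ℝ ℂ)).eval z = 0 → z.re < 0) :
    (∀ z : ℂ, (E.map (algebraMap ℝ ℂ)).eval z = 0 → z.im = 0 ∧ z.re ≤ 0) ∧
    (∀ z : ℂ, (O.map (algebraMap ℝ ℂ)).eval z = 0 → z.im = 0 ∧ z.re ≤ 0) := by
  have key := fun {z : ℂ} (hz : 0 < z.re) => hb_abs_eval_neg_lt P hdeg hroots hz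
  have split := hb_eval_split P E O hE hO
  constructor
  · intro w hw
    by_contra hbad
    obtain ⟨z, hz, rfl⟩ := hb_exists_sqrt w hbad
    have h1 := split z
    have h2 := split (-z)
    rw [neg_pow, show (-1 : ℂ) ^ 2 = 1 by norm_num, one_mul] at h2
    have heq : (P.map (algebraMap ℝ ℂ)).eval (-z) = -((P.map (algebraMap ℝ ℂ)).eval z) := by
      rw [h1, h2, hw]; ring
    have hk := key hz
    rw [heq, norm_neg] at hk
    exact lt_irrefl _ hk
  · intro w hw
    by_contra hbad
    obtain ⟨z, hz, rfl⟩ := hb_exists_sqrt w hbad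
    have h1 := split z
    have h2 := split (-z)
    rw [neg_pow, show (-1 : ℂ) ^ 2 = 1 by norm_num, one_mul] at h2
    have heq : (P.map (algebraMap ℝ ℂ)).eval (-z) = (P.map (algebraMap ℝ ℂ)).eval z := by
      rw [h1, h2, hw]; ring
    have hk := key hz
    rw [heq] at hk
    exact lt_irrefl _ hk
end

section
/- If a polynomial F(t) = \sum_{k=0}^m f_k t^k with real coefficients has only real zeros, then for every k with 1 ≤ k ≤ m−1, k(m−k) f_k^2 ≥ (k+1)(m−k+1) f_{k−1} f_{k+1} (Newton's inequalities). -/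
open Finset

open Polynomial in
private lemma newton_splits_derivative (p : ℝ[X]) (h : p.Splits) :
    (derivative p).Splits := by
  by_cases h0 : p.natDegree = 0
  · have : derivative p = 0 := by
      rw [eq_C_of_natDegree_eq_zero h0, derivative_C]
    rw [this]; exact Splits.zero
  · rw [splits_iff_card_roots] at h ⊢
    have h1 := card_roots_le_derivative p
    have h2 := card_roots' (derivative p)
    have h3 := natDegree_derivative_le p
    omega

open Polynomial in
private lemma newton_splits_iterate_derivative (n : ℕ) (p : ℝ[X])
    (h : p.Splits) : (derivative^[n] p).Splits := by
  induction n with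
  | zero => exact h
  | succ n ih => rw [Function.iterate_succ_apply']; exact newton_splits_derivative _ ih

open Polynomial in
private lemma newton_splits_reflect_aux (a : ℝ) (s : Multiset ℝ) :
    ∀ N, Multiset.card s ≤ N →
      (reflect N (C a * (s.map fun r => X - C r).prod)).Splits := by
  induction s using Multiset.induction with
  | empty =>
      intro N _
      simp only [Multiset.map_zero, Multiset.prod_zero, mul_one, reflect_C]
      exact Splits.mul (Splits.C _) (Splits.X_pow _)
  | cons r s ih =>
      intro N hN
      rw [Multiset.card_cons] at hN
      obtain ⟨N', rfl⟩ : ∃ N', N = N' + 1 := ⟨N - 1, by omega⟩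
      have hdeg1 : (X - C r : ℝ[X]).natDegree ≤ 1 := by
        simp [natDegree_X_sub_C]
      have hdegprod : ((s.map fun r => X - C r).prod : ℝ[X]).natDegree ≤ Multiset.card s := by
        refine (natDegree_multiset_prod_le _).trans ?_
        rw [Multiset.map_map]
        have : (s.map fun r => ((X - C r : ℝ[X]).natDegree)) = s.map fun _ => 1 := by
          simp [natDegree_X_sub_C]
        simp only [Function.comp]
        rw [this]
        simp
      have hdeg2 : (C a * (s.map fun r => X - C r).prod : ℝ[X]).natDegree ≤ N' :=
        (natDegree_C_mul_le _ _).trans (hdegprod.trans (by omega))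
      have hre : C a * ((r ::ₘ s).map fun r => X - C r).prod
          = (X - C r) * (C a * (s.map fun r => X - C r).prod) := by
        rw [Multiset.map_cons, Multiset.prod_cons]; ring
      rw [hre, show N' + 1 = 1 + N' by omega, reflect_mul _ _ hdeg1 hdeg2]
      refine Splits.mul ?_ (ih N' (by omega))
      have : reflect 1 (X - C r : ℝ[X]) = 1 - C r * X := by
        rw [reflect_sub, reflect_C, pow_one]
        simp
      rw [this]
      apply Splits.of_natDegree_le_one
      exact (natDegree_sub_le _ _).trans (by simp [natDegree_C_mul_le]; exact (natDegree_C_mul_le r X).trans (by simp))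

open Polynomial in
private lemma newton_splits_reflect (N : ℕ) (p : ℝ[X]) (hd : p.natDegree ≤ N)
    (h : p.Splits) : (reflect N p).Splits := by
  have := newton_splits_reflect_aux p.leadingCoeff p.roots N ((card_roots' p).trans hd)
  rwa [← h.eq_prod_roots] at this

open Polynomial in
private lemma newton_splits_of_roots_real : ∀ n : ℕ, ∀ p : ℝ[X], p.natDegree ≤ n →
    (∀ z : ℂ, eval z (p.map (algebraMap ℝ ℂ)) = 0 → z.im = 0) →
    p.Splits := by
  intro n
  induction n with
  | zero => exact fun p hp _ => Splits.of_natDegree_le_one (by omega)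
  | succ n ih =>
    intro p hp hroots
    by_cases h1 : p.natDegree ≤ 1
    · exact Splits.of_natDegree_le_one h1
    have hp0 : p ≠ 0 := fun h => by simp [h] at h1
    have hdeg : 0 < (p.map (algebraMap ℝ ℂ)).degree := by
      rw [degree_map]
      exact natDegree_pos_iff_degree_pos.mp (by omega)
    obtain ⟨z, hz⟩ := Complex.exists_root hdeg
    have him := hroots z hz
    have hzr : z = ((z.re : ℝ) : ℂ) := Complex.ext rfl (by simp [him])
    have hr : p.IsRoot z.re := by
      have h2 : eval ((algebraMap ℝ ℂ) z.re) (p.map (algebraMap ℝ ℂ)) = 0 := by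
        rw [show ((algebraMap ℝ ℂ) z.re) = z from hzr.symm]; exact hz
      rw [eval_map, eval₂_at_apply, Complex.coe_algebraMap] at h2
      show Polynomial.eval z.re p = 0
      exact_mod_cast h2
    obtain ⟨q, hq⟩ := dvd_iff_isRoot.mpr hr
    have hq0 : q ≠ 0 := by rintro rfl; rw [mul_zero] at hq; exact hp0 hq
    have hdq : q.natDegree ≤ n := by
      have hmul : p.natDegree = 1 + q.natDegree := by
        rw [hq, natDegree_mul (X_sub_C_ne_zero z.re) hq0, natDegree_X_sub_C]
      omega
    have hq_roots : ∀ w : ℂ, eval w (q.map (algebraMap ℝ ℂ)) = 0 → w.im = 0 := by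
      intro w hw
      apply hroots w
      rw [hq, Polynomial.map_mul, eval_mul, hw, mul_zero]
    rw [hq]
    exact Splits.mul (Splits.of_natDegree_le_one (by simp [natDegree_X_sub_C])) (ih q hdq hq_roots)

open Polynomial in
private lemma newton_quadratic (q : ℝ[X]) (hdeg : q.natDegree ≤ 2)
    (hs : q.Splits) :
    4 * (q.coeff 2 * q.coeff 0) ≤ (q.coeff 1) ^ 2 := by
  by_cases h2 : q.coeff 2 = 0
  · rw [h2]; simpa using sq_nonneg (q.coeff 1)
  · have hq0 : q ≠ 0 := fun h => h2 (by simp [h])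
    have hd : q.natDegree = 2 := le_antisymm hdeg (le_natDegree_of_ne_zero h2)
    have hdeg0 : q.degree ≠ 0 := by
      rw [degree_eq_natDegree hq0, hd]
      exact_mod_cast (by norm_num : ((2 : ℕ) : WithBot ℕ) ≠ (0 : ℕ))
    obtain ⟨x, hx0⟩ := hs.exists_eval_eq_zero hdeg0
    have hx : q.eval x = 0 := hx0
    have heval : q.coeff 0 + q.coeff 1 * x + q.coeff 2 * x ^ 2 = 0 := by
      have h3 := eval_eq_sum_range (p := q) x
      rw [hd] at h3
      rw [hx] at h3
      simp [Finset.sum_range_succ] at h3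
      linarith [h3]
    have h4 : q.coeff 1 ^ 2 - 4 * (q.coeff 2 * q.coeff 0)
        = (2 * q.coeff 2 * x + q.coeff 1) ^ 2 := by
      linear_combination (-4 * q.coeff 2) * heval
    nlinarith [sq_nonneg (2 * q.coeff 2 * x + q.coeff 1), h4]

private lemma newton_two_mul_descFactorial (b : ℕ) :
    2 * (b + 2).descFactorial b = (b + 2).factorial := by
  have h1 : (b + 2).descFactorial (b + 2) = (b + 2).factorial := Nat.descFactorial_self _
  rw [Nat.descFactorial_succ, Nat.descFactorial_succ] at h1
  simp only [Nat.add_sub_cancel_left, show b + 2 - (b + 1) = 1 by omega,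
    show b + 2 - b = 2 by omega, one_mul] at h1
  omega

private lemma newton_succ_descFactorial (b : ℕ) :
    (b + 1).descFactorial b = (b + 1).factorial := by
  have h1 : (b + 1).descFactorial (b + 1) = (b + 1).factorial := Nat.descFactorial_self _
  rwa [Nat.descFactorial_succ, show b + 1 - b = 1 by omega, one_mul] at h1

/-- Newton's inequalities: if `F(t) = ∑_{k=0}^m f_k t^k` has only real zeros, then
`k(m−k) f_k² ≥ (k+1)(m−k+1) f_{k−1} f_{k+1}` for `1 ≤ k ≤ m−1`. -/
theorem newton_inequalities (m : ℕ) (f : ℕ → ℝ)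
    (hreal : ∀ z : ℂ, (∑ k ∈ Finset.range (m + 1), (f k : ℂ) * z ^ k) = 0 → z.im = 0) :
    ∀ k, 1 ≤ k → k + 1 ≤ m →
      ((k * (m - k) : ℕ) : ℝ) * (f k) ^ 2 ≥
        (((k + 1) * (m - k + 1) : ℕ) : ℝ) * f (k - 1) * f (k + 1) := by
  intro k hk1 hkm
  obtain ⟨a, rfl⟩ : ∃ a, k = a + 1 := ⟨k - 1, by omega⟩
  obtain ⟨b, rfl⟩ : ∃ b, m = a + b + 2 := ⟨m - a - 2, by omega⟩
  open Polynomial in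
  set p : ℝ[X] := ∑ i ∈ Finset.range (a + b + 3), Polynomial.C (f i) * Polynomial.X ^ i with hp
  have hcoeff : ∀ i, i ≤ a + b + 2 → p.coeff i = f i := by
    intro i hi
    rw [hp, Polynomial.finset_sum_coeff]
    simp only [Polynomial.coeff_C_mul, Polynomial.coeff_X_pow, mul_ite, mul_one, mul_zero]
    rw [Finset.sum_ite_eq (Finset.range (a + b + 3)) i f]
    simp [Finset.mem_range]; omega
  have hdeg : p.natDegree ≤ a + b + 2 := by
    apply Polynomial.natDegree_sum_le_of_forall_le
    intro i hi
    refine (Polynomial.natDegree_C_mul_le _ _).trans ?_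
    rw [Polynomial.natDegree_X_pow]
    have := Finset.mem_range.mp hi; omega
  have heval : ∀ z : ℂ, Polynomial.eval z (p.map (algebraMap ℝ ℂ))
      = ∑ i ∈ Finset.range (a + b + 3), (f i : ℂ) * z ^ i := by
    intro z
    rw [hp, Polynomial.map_sum, Polynomial.eval_finset_sum]
    refine Finset.sum_congr rfl fun i _ => ?_
    simp [Polynomial.map_mul, Polynomial.map_pow]
  have hsplit : p.Splits := by
    refine newton_splits_of_roots_real (a + b + 2) p hdeg fun z hz => ?_
    refine hreal z ?_
    rw [show a + b + 2 + 1 = a + b + 3 by omega, ← heval z]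
    exact hz
  set q : ℝ[X] := Polynomial.derivative^[b]
    (Polynomial.reflect (b + 2) (Polynomial.derivative^[a] p)) with hqdef
  have hd1 : (Polynomial.derivative^[a] p).natDegree ≤ b + 2 :=
    (Polynomial.natDegree_iterate_derivative p a).trans (by omega)
  have hq_splits : q.Splits :=
    newton_splits_iterate_derivative _ _
      (newton_splits_reflect _ _ hd1 (newton_splits_iterate_derivative _ _ hsplit))
  have hd2 : (Polynomial.reflect (b + 2) (Polynomial.derivative^[a] p)).natDegree ≤ b + 2 := by
    rw [Polynomial.natDegree_le_iff_coeff_eq_zero]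
    intro N hN
    rw [Polynomial.coeff_reflect, Polynomial.revAt_eq_self_of_lt hN]
    exact Polynomial.coeff_eq_zero_of_natDegree_lt (by omega)
  have hd3 : q.natDegree ≤ 2 :=
    (Polynomial.natDegree_iterate_derivative _ b).trans (by omega)
  have key := newton_quadratic q hd3 hq_splits
  -- compute the coefficients of q
  have c0 : q.coeff 0 = ((b.factorial * (a + 2).descFactorial a : ℕ) : ℝ) * f (a + 2) := by
    rw [hqdef, Polynomial.coeff_iterate_derivative, Polynomial.coeff_reflect]
    rw [show Polynomial.revAt (b + 2) (0 + b) = 2 by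
      rw [Polynomial.revAt_le (by omega)]; omega]
    rw [Polynomial.coeff_iterate_derivative, hcoeff (2 + a) (by omega)]
    simp only [nsmul_eq_mul, zero_add, Nat.descFactorial_self]
    rw [show 2 + a = a + 2 by omega]
    push_cast; ring
  have c1 : q.coeff 1 = (((b + 1).factorial * (a + 1).factorial : ℕ) : ℝ) * f (a + 1) := by
    rw [hqdef, Polynomial.coeff_iterate_derivative, Polynomial.coeff_reflect]
    rw [show Polynomial.revAt (b + 2) (1 + b) = 1 by
      rw [Polynomial.revAt_le (by omega)]; omega]
    rw [Polynomial.coeff_iterate_derivative, hcoeff (1 + a) (by omega)]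
    simp only [nsmul_eq_mul]
    rw [show 1 + b = b + 1 by omega, show 1 + a = a + 1 by omega,
      newton_succ_descFactorial, newton_succ_descFactorial]
    push_cast; ring
  have c2 : q.coeff 2 = (((b + 2).descFactorial b * a.factorial : ℕ) : ℝ) * f a := by
    rw [hqdef, Polynomial.coeff_iterate_derivative, Polynomial.coeff_reflect]
    rw [show Polynomial.revAt (b + 2) (2 + b) = 0 by
      rw [Polynomial.revAt_le (by omega)]; omega]
    rw [Polynomial.coeff_iterate_derivative, hcoeff (0 + a) (by omega)]
    simp only [nsmul_eq_mul, zero_add, Nat.descFactorial_self]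
    rw [show 2 + b = b + 2 by omega]
    push_cast; ring
  -- nat identities
  have hnat1 : ((b + 1).factorial * (a + 1).factorial) ^ 2
      = ((a + 1) * (b + 1))
        * (b.factorial * (b + 1).factorial * a.factorial * (a + 1).factorial) := by
    rw [Nat.factorial_succ b, Nat.factorial_succ a]
    ring
  have hnat2 : 4 * (((b + 2).descFactorial b * a.factorial)
        * (b.factorial * (a + 2).descFactorial a))
      = ((a + 2) * (b + 2))
        * (b.factorial * (b + 1).factorial * a.factorial * (a + 1).factorial) := by
    calc 4 * (((b + 2).descFactorial b * a.factorial)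
          * (b.factorial * (a + 2).descFactorial a))
        = (2 * (b + 2).descFactorial b) * (2 * (a + 2).descFactorial a)
            * (a.factorial * b.factorial) := by ring
      _ = (b + 2).factorial * (a + 2).factorial * (a.factorial * b.factorial) := by
          rw [newton_two_mul_descFactorial, newton_two_mul_descFactorial]
      _ = (a + 2) * (b + 2)
            * (b.factorial * (b + 1).factorial * a.factorial * (a + 1).factorial) := by
          rw [Nat.factorial_succ (b + 1), Nat.factorial_succ (a + 1)]
          ring
  -- move to the reals
  set c : ℝ := (b.factorial : ℝ) * ((b + 1).factorial : ℝ)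
      * (a.factorial : ℝ) * ((a + 1).factorial : ℝ) with hc
  have hcpos : 0 < c := by
    rw [hc]
    have h1 : (0 : ℝ) < (b.factorial : ℝ) := by exact_mod_cast b.factorial_pos
    have h2 : (0 : ℝ) < ((b + 1).factorial : ℝ) := by exact_mod_cast (b + 1).factorial_pos
    have h3 : (0 : ℝ) < (a.factorial : ℝ) := by exact_mod_cast a.factorial_pos
    have h4 : (0 : ℝ) < ((a + 1).factorial : ℝ) := by exact_mod_cast (a + 1).factorial_pos
    exact mul_pos (mul_pos (mul_pos h1 h2) h3) h4
  have hn1R : (((b + 1).factorial : ℝ) * ((a + 1).factorial : ℝ)) ^ 2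
      = (((a : ℝ) + 1) * ((b : ℝ) + 1)) * c := by
    rw [hc]; exact_mod_cast hnat1
  have hn2R : 4 * ((((b + 2).descFactorial b : ℝ) * (a.factorial : ℝ))
        * ((b.factorial : ℝ) * (((a + 2).descFactorial a : ℝ))))
      = (((a : ℝ) + 2) * ((b : ℝ) + 2)) * c := by
    rw [hc]; exact_mod_cast hnat2
  rw [show a + 1 - 1 = a by omega, show a + 1 + 1 = a + 2 by omega,
    show a + b + 2 - (a + 1) = b + 1 by omega]
  rw [ge_iff_le]
  push_cast
  rw [← mul_le_mul_iff_right₀ hcpos]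
  calc c * (((a : ℝ) + 2) * ((b : ℝ) + 1 + 1) * f a * f (a + 2))
      = 4 * (q.coeff 2 * q.coeff 0) := by
        rw [c0, c2]
        push_cast
        linear_combination (-(f a * f (a + 2))) * hn2R
    _ ≤ (q.coeff 1) ^ 2 := key
    _ = c * (((a : ℝ) + 1) * ((b : ℝ) + 1) * f (a + 1) ^ 2) := by
        rw [c1]
        push_cast
        linear_combination (f (a + 1) ^ 2) * hn1R
end

section
/- Let X_1, …, X_n be independent random variables with values in {0,1,2}, let S_n = X_1 + ⋯ + X_n, and let e_k = P(S_n = 2k) for 0 ≤ k ≤ n. Then the sequence (e_0, …, e_n) is ultra-log-concave of order n. -/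
open Finset
open Polynomial

/-- From log-concavity plus support conditions: `f k * f (k+3) ≤ f (k+1) * f (k+2)`. -/
lemma lc_ad (f : ℕ → ℝ) (n : ℕ)
    (hf0 : ∀ k, 0 ≤ f k)
    (hfv : ∀ k, n < k → f k = 0)
    (hfz : ∀ k, k + 1 ≤ n → f (k+1) = 0 → f k = 0)
    (hflc : ∀ k, f k * f (k+2) ≤ f (k+1)^2) :
    ∀ k, f k * f (k+3) ≤ f (k+1) * f (k+2) := by
  intro k
  rcases eq_or_lt_of_le (hf0 (k+1)) with h1 | h1
  · have hB : f (k+1) = 0 := h1.symm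
    by_cases hk : k + 1 ≤ n
    · rw [hfz k hk hB, zero_mul]
      exact mul_nonneg (hf0 _) (hf0 _)
    · rw [hfv (k+3) (by omega), mul_zero, hB, zero_mul]
  rcases eq_or_lt_of_le (hf0 (k+2)) with h2 | h2
  · have hC : f (k+2) = 0 := h2.symm
    by_cases hk : k + 2 ≤ n
    · have hB : f (k+1) = 0 := hfz (k+1) hk hC
      have hA : f k = 0 := hfz k (by omega) hB
      rw [hA, zero_mul, hB, zero_mul]
    · have hD : f (k+3) = 0 := hfv _ (by omega)
      rw [hD, mul_zero]
      exact mul_nonneg (hf0 _) (hf0 _)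
  · have key : (f k * f (k+2)) * (f (k+1) * f (k+3)) ≤ f (k+1)^2 * f (k+2)^2 :=
      mul_le_mul (hflc k) (hflc (k+1)) (mul_nonneg (hf0 _) (hf0 _)) (by positivity)
    nlinarith [mul_pos h1 h2, hf0 k, hf0 (k+3)]

/-- Adding a "root" `a ≥ 0` preserves the normalized log-concavity package. -/
lemma LC_step (n : ℕ) (a : ℝ) (ha : 0 ≤ a) (f g : ℕ → ℝ)
    (hf0 : ∀ k, 0 ≤ f k)
    (hfv : ∀ k, n < k → f k = 0)
    (hfz : ∀ k, k + 1 ≤ n → f (k+1) = 0 → f k = 0)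
    (hflc : ∀ k, f k * f (k+2) ≤ f (k+1)^2)
    (hg0 : g 0 = a * (n+1) * f 0)
    (hgs : ∀ k, g (k+1) = a * ((n - k : ℕ) : ℝ) * f (k+1) + (k+1) * f k) :
    (∀ k, 0 ≤ g k) ∧ (∀ k, n + 1 < k → g k = 0) ∧
    (∀ k, k + 1 ≤ n + 1 → g (k+1) = 0 → g k = 0) ∧
    (∀ k, g k * g (k+2) ≤ g (k+1)^2) := by
  have hg0' : ∀ k, 0 ≤ g k := by
    intro k
    match k with
    | 0 =>
      rw [hg0]
      exact mul_nonneg (mul_nonneg ha (by positivity)) (hf0 0)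
    | (k+1) =>
      rw [hgs k]
      exact add_nonneg (mul_nonneg (mul_nonneg ha (Nat.cast_nonneg _)) (hf0 _))
        (mul_nonneg (by positivity) (hf0 _))
  refine ⟨hg0', ?_, ?_, ?_⟩
  · intro k hk
    match k, hk with
    | (k+1), hk =>
      rw [hgs k, hfv k (by omega), hfv (k+1) (by omega)]
      ring
  · intro k hk hk0
    rw [hgs k] at hk0
    push_cast at hk0
    have h1 : (0:ℝ) ≤ a * ((n - k : ℕ) : ℝ) * f (k+1) :=
      mul_nonneg (mul_nonneg ha (Nat.cast_nonneg _)) (hf0 _)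
    have h2 : (0:ℝ) ≤ ((k:ℝ)+1) * f k := mul_nonneg (by positivity) (hf0 _)
    have h3 : ((k:ℝ)+1) * f k = 0 := by linarith
    have hfk : f k = 0 := by
      have hk1 : ((k:ℝ)+1) ≠ 0 := by positivity
      exact (mul_eq_zero.1 h3).resolve_left hk1
    match k, hk, hfk with
    | 0, hk, hfk => rw [hg0, hfk]; ring
    | (k+1), hk, hfk =>
      rw [hgs k, hfk, hfz k (by omega) hfk]
      ring
  · have hAD := lc_ad f n hf0 hfv hfz hflc
    intro k
    match k with
    | 0 =>
      match n with
      | 0 =>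
        have e2 := hgs 1
        rw [hfv 1 (by omega), hfv 2 (by omega)] at e2
        have hg2 : g 2 = 0 := by rw [e2]; ring
        rw [hg2, mul_zero]
        positivity
      | (m+1) =>
        have e0 := hg0
        have e1 := hgs 0
        have e2 := hgs 1
        have c1 : ((m + 1 - 0 : ℕ) : ℝ) = (m:ℝ) + 1 := by norm_num
        have c2 : ((m + 1 - 1 : ℕ) : ℝ) = (m:ℝ) := by norm_num
        rw [c1] at e1; rw [c2] at e2
        have T1 : (0:ℝ) ≤ a^2 * ((m:ℝ)^2 + 2*m) * (f 1 ^2 - f 0 * f 2) :=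
          mul_nonneg (mul_nonneg (sq_nonneg a) (by positivity)) (sub_nonneg.2 (hflc 0))
        have T4 := sq_nonneg (a * f 1 - f 0)
        rw [e0, e1, e2]
        push_cast
        nlinarith [T1, T4]
    | (k+1) =>
      by_cases hn : n < k + 2
      · have h3 : g (k+3) = 0 := by
          rw [hgs (k+2), hfv (k+2) (by omega), hfv (k+3) (by omega)]; ring
        rw [h3, mul_zero]
        positivity
      obtain ⟨m, hm⟩ := Nat.exists_eq_add_of_le (not_lt.1 hn)
      have e1 := hgs k
      have e2 := hgs (k+1)
      have e3 := hgs (k+2)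
      have c1 : ((n - k : ℕ) : ℝ) = (m:ℝ) + 2 := by
        subst hm; rw [show k+2+m-k = m+2 by omega]; push_cast; ring
      have c2 : ((n - (k+1) : ℕ) : ℝ) = (m:ℝ) + 1 := by
        subst hm; rw [show k+2+m-(k+1) = m+1 by omega]; push_cast; ring
      have c3 : ((n - (k+2) : ℕ) : ℝ) = (m:ℝ) := by
        subst hm; rw [show k+2+m-(k+2) = m by omega]
      rw [c1] at e1; rw [c2] at e2; rw [c3] at e3
      have T1 : (0:ℝ) ≤ a^2 * (((m:ℝ)+2) * m) * (f (k+2)^2 - f (k+1) * f (k+3)) :=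
        mul_nonneg (mul_nonneg (sq_nonneg a) (by positivity)) (sub_nonneg.2 (hflc (k+1)))
      have T2 : (0:ℝ) ≤ (((k:ℝ)+1)*((k:ℝ)+3)) * (f (k+1)^2 - f k * f (k+2)) :=
        mul_nonneg (by positivity) (sub_nonneg.2 (hflc k))
      have T3 : (0:ℝ) ≤ a * (((k:ℝ)+1)*(m:ℝ)) * (f (k+1) * f (k+2) - f k * f (k+3)) :=
        mul_nonneg (mul_nonneg ha (by positivity)) (sub_nonneg.2 (hAD k))
      have T4 := sq_nonneg (a * f (k+2) - f (k+1))
      rw [e1, e2, e3]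
      push_cast
      nlinarith [T1, T2, T3, T4]

open Finset Polynomial

noncomputable def useq (s : Multiset ℝ) (k : ℕ) : ℝ :=
  ((s.map fun r => X + C r).prod).coeff k

noncomputable def fseq (s : Multiset ℝ) (k : ℕ) : ℝ :=
  (k.factorial : ℝ) * ((Multiset.card s - k).factorial : ℝ) * useq s k

lemma useq_empty (k : ℕ) : useq 0 k = if k = 0 then 1 else 0 := by
  simp [useq, Polynomial.coeff_one, eq_comm]

lemma useq_cons_zero (a : ℝ) (s : Multiset ℝ) : useq (a ::ₘ s) 0 = a * useq s 0 := by
  simp [useq, Multiset.map_cons, Multiset.prod_cons, Polynomial.mul_coeff_zero]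

lemma useq_cons_succ (a : ℝ) (s : Multiset ℝ) (k : ℕ) :
    useq (a ::ₘ s) (k+1) = useq s k + a * useq s (k+1) := by
  simp [useq, Multiset.map_cons, Multiset.prod_cons, add_mul, Polynomial.coeff_add,
    Polynomial.coeff_X_mul, Polynomial.coeff_C_mul]

lemma fseq_cons_zero (a : ℝ) (s : Multiset ℝ) :
    fseq (a ::ₘ s) 0 = a * (Multiset.card s + 1) * fseq s 0 := by
  unfold fseq
  rw [useq_cons_zero, Multiset.card_cons, Nat.sub_zero, Nat.sub_zero, Nat.factorial_succ]
  push_cast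
  ring

lemma fseq_cons_succ (a : ℝ) (s : Multiset ℝ) (k : ℕ)
    (hvan : ∀ j, Multiset.card s < j → useq s j = 0) :
    fseq (a ::ₘ s) (k+1)
      = a * ((Multiset.card s - k : ℕ) : ℝ) * fseq s (k+1) + (k+1) * fseq s k := by
  unfold fseq
  rw [useq_cons_succ, Multiset.card_cons]
  by_cases hk : k < Multiset.card s
  · obtain ⟨m, hm⟩ : ∃ m, Multiset.card s = k + 1 + m := ⟨Multiset.card s - (k+1), by omega⟩
    rw [hm, show k+1+m+1-(k+1) = m+1 by omega, show k+1+m-(k+1) = m by omega,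
      show k+1+m-k = m+1 by omega]
    rw [Nat.factorial_succ m, Nat.factorial_succ k]
    push_cast
    ring
  · have h1 : useq s (k+1) = 0 := hvan _ (by omega)
    have h2 : Multiset.card s - k = 0 := by omega
    have h3 : Multiset.card s + 1 - (k+1) = Multiset.card s - k := by omega
    rw [h1, h2, h3, h2, Nat.factorial_succ k]
    push_cast
    ring

lemma useq_package (s : Multiset ℝ) (hs : ∀ r ∈ s, 0 ≤ r) :
    (∀ k, 0 ≤ useq s k) ∧ (∀ k, Multiset.card s < k → useq s k = 0) ∧
    (∀ k, k + 1 ≤ Multiset.card s → fseq s (k+1) = 0 → fseq s k = 0) ∧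
    (∀ k, fseq s k * fseq s (k+2) ≤ fseq s (k+1)^2) := by
  induction s using Multiset.induction_on with
  | empty =>
    refine ⟨?_, ?_, ?_, ?_⟩
    · intro k; rw [useq_empty]; split <;> norm_num
    · intro k hk
      rw [useq_empty, if_neg]
      simp at hk
      omega
    · intro k hk
      simp at hk
    · intro k
      have h1 : fseq 0 (k+1) = 0 := by
        simp [fseq, useq_empty]
      have h2 : fseq 0 (k+2) = 0 := by
        simp [fseq, useq_empty]
      rw [h1, h2, mul_zero]
      positivity
  | cons a s ih =>
    have ha : 0 ≤ a := hs a (Multiset.mem_cons_self a s)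
    obtain ⟨u0, uv, fz, flc⟩ := ih (fun r hr => hs r (Multiset.mem_cons_of_mem hr))
    have hf0 : ∀ k, 0 ≤ fseq s k := by
      intro k
      exact mul_nonneg (mul_nonneg (by positivity) (by positivity)) (u0 k)
    have hfv : ∀ k, Multiset.card s < k → fseq s k = 0 := by
      intro k hk; rw [fseq, uv k hk, mul_zero]
    obtain ⟨g0, gv, gz, glc⟩ := LC_step (Multiset.card s) a ha (fseq s) (fseq (a ::ₘ s))
      hf0 hfv fz flc (fseq_cons_zero a s) (fun k => fseq_cons_succ a s k uv)
    refine ⟨?_, ?_, ?_, ?_⟩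
    · intro k
      match k with
      | 0 => rw [useq_cons_zero]; exact mul_nonneg ha (u0 0)
      | (k+1) =>
        rw [useq_cons_succ]
        exact add_nonneg (u0 k) (mul_nonneg ha (u0 (k+1)))
    · intro k hk
      rw [Multiset.card_cons] at hk
      match k, hk with
      | (k+1), hk =>
        rw [useq_cons_succ, uv k (by omega), uv (k+1) (by omega)]
        ring
    · intro k hk
      rw [Multiset.card_cons] at hk
      exact gz k hk
    · exact glc

open Finset Polynomial

lemma sum_range_two_mul (N : ℕ) (h : ℕ → ℂ) :
    ∑ m ∈ Finset.range (2*N), h m = ∑ i ∈ Finset.range N, (h (2*i) + h (2*i+1)) := by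
  induction N with
  | zero => simp
  | succ N ih =>
    rw [Finset.sum_range_succ, ← ih, show 2*(N+1) = 2*N+1+1 by ring,
      Finset.sum_range_succ, Finset.sum_range_succ]
    ring

lemma exists_sqrt_re_pos (z : ℂ) (hz : ¬(z.im = 0 ∧ z.re ≤ 0)) :
    ∃ y : ℂ, y^2 = z ∧ 0 < y.re := by
  have hz0 : z ≠ 0 := by
    intro h; subst h; exact hz (by simp)
  have h1 := Complex.neg_pi_lt_arg z
  have h2 : z.arg ≤ Real.pi := Complex.arg_le_pi z
  have h3 : z.arg ≠ Real.pi := fun h => by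
    rcases Complex.arg_eq_pi_iff.1 h with ⟨hre, him⟩
    exact hz ⟨him, hre.le⟩
  have h4 : z.arg < Real.pi := lt_of_le_of_ne h2 h3
  refine ⟨(Real.sqrt ‖z‖ : ℂ) * Complex.exp ((z.arg / 2 : ℝ) * Complex.I), ?_, ?_⟩
  · have e1 : (Complex.exp (((z.arg / 2 : ℝ) : ℂ) * Complex.I))^2
        = Complex.exp ((z.arg : ℝ) * Complex.I) := by
      rw [← Complex.exp_nat_mul]
      congr 1
      push_cast
      ring
    have e2 : ((Real.sqrt ‖z‖ : ℝ) : ℂ)^2 = ((‖z‖ : ℝ) : ℂ) := by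
      rw [← Complex.ofReal_pow, Real.sq_sqrt (norm_nonneg z)]
    rw [mul_pow, e1, e2, Complex.norm_mul_exp_arg_mul_I]
  · have hre : (Complex.exp (((z.arg / 2 : ℝ) : ℂ) * Complex.I)).re = Real.cos (z.arg / 2) :=
      Complex.exp_ofReal_mul_I_re _
    rw [Complex.re_ofReal_mul, hre]
    apply mul_pos
    · exact Real.sqrt_pos.2 (norm_pos_iff.mpr hz0)
    · exact Real.cos_pos_of_mem_Ioo ⟨by linarith, by linarith⟩

lemma factor_abs_lt (a b c : ℝ) (ha : 0 < a) (hb : 0 < b) (hc : 0 < c)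
    (y : ℂ) (hy : 0 < y.re) :
    ‖(a:ℂ) - (b:ℂ)*y + (c:ℂ)*y^2‖ < ‖(a:ℂ) + (b:ℂ)*y + (c:ℂ)*y^2‖ := by
  rw [Complex.norm_def, Complex.norm_def]
  apply Real.sqrt_lt_sqrt (Complex.normSq_nonneg _)
  simp only [Complex.normSq_apply, Complex.add_re, Complex.add_im, Complex.sub_re,
    Complex.sub_im, Complex.mul_re, Complex.mul_im, Complex.ofReal_re, Complex.ofReal_im,
    pow_two]
  nlinarith [mul_pos (mul_pos hb hy)
      (show (0:ℝ) < a + c*(y.re^2 + y.im^2) by positivity), sq_nonneg y.im]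

lemma prod_abs_lt {n : ℕ} (hn : n ≠ 0) (F G : Fin n → ℂ)
    (h : ∀ i, ‖G i‖ < ‖F i‖) :
    ‖∏ i, G i‖ < ‖∏ i, F i‖ := by
  have : Nonempty (Fin n) := ⟨⟨0, Nat.pos_of_ne_zero hn⟩⟩
  rw [norm_prod, norm_prod]
  by_cases h0 : ∀ i, 0 < ‖G i‖
  · exact Finset.prod_lt_prod_of_nonempty (fun i _ => h0 i) (fun i _ => h i) Finset.univ_nonempty
  · push_neg at h0
    obtain ⟨i0, hi0⟩ := h0
    have hz : ‖G i0‖ = 0 := le_antisymm hi0 (norm_nonneg _)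
    rw [Finset.prod_eq_zero (Finset.mem_univ i0) hz]
    exact Finset.prod_pos fun i _ => lt_of_le_of_lt (norm_nonneg _) (h i)

noncomputable def Ppoly (n : ℕ) (p : Fin n → Fin 3 → ℝ) : Polynomial ℝ :=
  ∏ i, (C (p i 2) * X^2 + C (p i 1) * X + C (p i 0))

lemma eterm_eq_coeff (n : ℕ) (p : Fin n → Fin 3 → ℝ) (m : ℕ) :
    ∑ x ∈ Finset.univ.filter (fun x : Fin n → Fin 3 => ∑ i, (x i : ℕ) = m), ∏ i, p i (x i)
      = (Ppoly n p).coeff m := by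
  have h1 : ∀ i : Fin n, (C (p i 2) * X^2 + C (p i 1) * X + C (p i 0) : Polynomial ℝ)
      = ∑ j : Fin 3, C (p i j) * X^(j:ℕ) := by
    intro i
    rw [Fin.sum_univ_three]
    have e0 : ((0 : Fin 3) : ℕ) = 0 := rfl
    have e1 : ((1 : Fin 3) : ℕ) = 1 := rfl
    have e2 : ((2 : Fin 3) : ℕ) = 2 := rfl
    rw [e0, e1, e2, pow_zero, pow_one, mul_one]
    ring
  unfold Ppoly
  simp_rw [h1]
  rw [Finset.prod_univ_sum, Fintype.piFinset_univ, Polynomial.finset_sum_coeff]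
  have h2 : ∀ x : Fin n → Fin 3,
      (∏ i, C (p i (x i)) * X^((x i : ℕ)) : Polynomial ℝ).coeff m
        = if ∑ i, (x i : ℕ) = m then ∏ i, p i (x i) else 0 := by
    intro x
    rw [Finset.prod_mul_distrib, ← map_prod, Finset.prod_pow_eq_pow_sum,
      Polynomial.coeff_C_mul, Polynomial.coeff_X_pow]
    by_cases h : (∑ i, (x i : ℕ)) = m
    · rw [if_pos h, if_pos h.symm, mul_one]
    · rw [if_neg h, if_neg (fun hh => h hh.symm), mul_zero]
  rw [Finset.sum_congr rfl (fun x _ => h2 x)]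
  exact Finset.sum_filter _ _

theorem pos_case (n : ℕ) (p : Fin n → Fin 3 → ℝ) (hp : ∀ i j, 0 < p i j)
    (k : ℕ) (hk1 : 1 ≤ k) (hkn : k + 1 ≤ n) :
    (((k + 1) * (n - k + 1) : ℕ) : ℝ) *
        (∑ x ∈ Finset.univ.filter (fun x : Fin n → Fin 3 => ∑ i, (x i : ℕ) = 2 * (k-1)),
          ∏ i, p i (x i)) *
        (∑ x ∈ Finset.univ.filter (fun x : Fin n → Fin 3 => ∑ i, (x i : ℕ) = 2 * (k+1)),
          ∏ i, p i (x i))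
      ≤ ((k * (n - k) : ℕ) : ℝ) *
        (∑ x ∈ Finset.univ.filter (fun x : Fin n → Fin 3 => ∑ i, (x i : ℕ) = 2 * k),
          ∏ i, p i (x i))^2 := by
  have hn : n ≠ 0 := by omega
  -- basic facts about P
  have hfacdeg : ∀ i : Fin n,
      (C (p i 2) * X^2 + C (p i 1) * X + C (p i 0) : Polynomial ℝ).natDegree = 2 :=
    fun i => Polynomial.natDegree_quadratic (ne_of_gt (hp i 2))
  have hfacne : ∀ i : Fin n,
      (C (p i 2) * X^2 + C (p i 1) * X + C (p i 0) : Polynomial ℝ) ≠ 0 := by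
    intro i h
    have := hfacdeg i
    rw [h] at this
    simp at this
  have hPdeg : (Ppoly n p).natDegree = 2*n := by
    rw [Ppoly, Polynomial.natDegree_prod _ _ (fun i _ => hfacne i)]
    simp [hfacdeg]
    ring
  have hlc : (Ppoly n p).leadingCoeff = ∏ i, p i 2 := by
    rw [Ppoly, Polynomial.leadingCoeff_prod]
    exact Finset.prod_congr rfl fun i _ => Polynomial.leadingCoeff_quadratic (ne_of_gt (hp i 2))
  have hlcpos : (0:ℝ) < ∏ i, p i 2 := Finset.prod_pos fun i _ => hp i 2
  have hPlc : (Ppoly n p).coeff (2*n) = ∏ i, p i 2 := by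
    rw [← hPdeg, Polynomial.coeff_natDegree, hlc]
  -- the even part E
  set E : Polynomial ℝ := ∑ j ∈ Finset.range (n+1), C ((Ppoly n p).coeff (2*j)) * X^j with hE
  have hEco : ∀ j, E.coeff j = if j ≤ n then (Ppoly n p).coeff (2*j) else 0 := by
    intro j
    rw [hE, Polynomial.finset_sum_coeff]
    simp_rw [Polynomial.coeff_C_mul, Polynomial.coeff_X_pow]
    simp only [mul_ite, mul_one, mul_zero]
    rw [Finset.sum_ite_eq (Finset.range (n+1)) j (fun i => (Ppoly n p).coeff (2*i))]
    simp [Nat.lt_succ_iff]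
  have hEn : E.coeff n = ∏ i, p i 2 := by rw [hEco n, if_pos (le_refl n), hPlc]
  have hEne : E ≠ 0 := by
    intro h
    rw [h, Polynomial.coeff_zero] at hEn
    exact absurd hEn.symm (ne_of_gt hlcpos)
  have hEdeg : E.natDegree = n :=
    le_antisymm (Polynomial.natDegree_le_iff_coeff_eq_zero.2 fun N hN => by
        rw [hEco N, if_neg (by omega)])
      (Polynomial.le_natDegree_of_ne_zero (by rw [hEn]; exact ne_of_gt hlcpos))
  -- complex side
  set W : Polynomial ℂ := E.map (algebraMap ℝ ℂ) with hW
  have hWne : W ≠ 0 := by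
    rw [hW]
    exact Polynomial.map_ne_zero hEne
  have hWdeg : W.natDegree = n := by
    apply le_antisymm (Polynomial.natDegree_map_le.trans (le_of_eq hEdeg))
    apply Polynomial.le_natDegree_of_ne_zero
    rw [Polynomial.coeff_map, hEn]
    simp only [Complex.coe_algebraMap]
    exact_mod_cast ne_of_gt hlcpos
  have hWlc : W.leadingCoeff = ((∏ i, p i 2 : ℝ) : ℂ) := by
    rw [Polynomial.leadingCoeff, hWdeg, Polynomial.coeff_map, hEn]
    simp [Complex.coe_algebraMap]
  -- key evaluation identity
  have hkey : ∀ y : ℂ, 2 * W.eval (y^2)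
      = ((Ppoly n p).map (algebraMap ℝ ℂ)).eval y
        + ((Ppoly n p).map (algebraMap ℝ ℂ)).eval (-y) := by
    intro y
    have d1 : ((Ppoly n p).map (algebraMap ℝ ℂ)).natDegree < 2*(n+1) := by
      have := Polynomial.natDegree_map_le (f := algebraMap ℝ ℂ) (p := Ppoly n p)
      omega
    have d2 : W.natDegree < n + 1 := by omega
    rw [Polynomial.eval_eq_sum_range' d1 y, Polynomial.eval_eq_sum_range' d1 (-y),
      ← Finset.sum_add_distrib, sum_range_two_mul (n+1),
      Polynomial.eval_eq_sum_range' d2 (y^2), Finset.mul_sum]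
    apply Finset.sum_congr rfl
    intro i hi
    rw [Finset.mem_range] at hi
    have hodd : ((-y)^(2*i+1)) = -(y^(2*i+1)) := Odd.neg_pow ⟨i, by ring⟩ y
    have heven : ((-y)^(2*i)) = y^(2*i) := Even.neg_pow ⟨i, by ring⟩ y
    rw [hodd, heven, Polynomial.coeff_map, Polynomial.coeff_map, Polynomial.coeff_map,
      hEco i, if_pos (by omega), ← pow_mul]
    ring
  -- all roots of W are real and nonpositive
  have hroots : ∀ z ∈ W.roots, z.im = 0 ∧ z.re ≤ 0 := by
    intro z hz
    by_contra hcon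
    obtain ⟨y, hy2, hyre⟩ := exists_sqrt_re_pos z hcon
    have hev : W.eval z = 0 := (Polynomial.mem_roots hWne).1 hz
    have h0 : ((Ppoly n p).map (algebraMap ℝ ℂ)).eval y
        + ((Ppoly n p).map (algebraMap ℝ ℂ)).eval (-y) = 0 := by
      rw [← hkey y, hy2, hev, mul_zero]
    have hPy : ∀ w : ℂ, ((Ppoly n p).map (algebraMap ℝ ℂ)).eval w
        = ∏ i, ((p i 0 : ℂ) + (p i 1 : ℂ) * w + (p i 2 : ℂ) * w^2) := by
      intro w
      rw [Ppoly, Polynomial.map_prod, Polynomial.eval_prod]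
      apply Finset.prod_congr rfl
      intro i _
      simp only [Polynomial.map_add, Polynomial.map_mul, Polynomial.map_pow,
        Polynomial.map_C, Polynomial.map_X, Polynomial.eval_add, Polynomial.eval_mul,
        Polynomial.eval_pow, Polynomial.eval_C, Polynomial.eval_X, Complex.coe_algebraMap]
      ring
    have habs : ‖((Ppoly n p).map (algebraMap ℝ ℂ)).eval (-y)‖
        < ‖((Ppoly n p).map (algebraMap ℝ ℂ)).eval y‖ := by
      rw [hPy, hPy]
      apply prod_abs_lt hn
      intro i
      have h := factor_abs_lt (p i 0) (p i 1) (p i 2) (hp i 0) (hp i 1) (hp i 2) y hyre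
      have e : (p i 0 : ℂ) + (p i 1 : ℂ) * (-y) + (p i 2 : ℂ) * (-y)^2
          = (p i 0 : ℂ) - (p i 1 : ℂ) * y + (p i 2 : ℂ) * y^2 := by ring
      rw [e]
      exact h
    have heq : ((Ppoly n p).map (algebraMap ℝ ℂ)).eval y
        = -((Ppoly n p).map (algebraMap ℝ ℂ)).eval (-y) := by
      linear_combination h0
    rw [heq, norm_neg] at habs
    exact lt_irrefl _ habs
  -- factorization of E over ℝ
  have hsplit : Polynomial.Splits W := IsAlgClosed.splits W
  have hWfac : W = Polynomial.C W.leadingCoeff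
      * (W.roots.map fun z => X - Polynomial.C z).prod :=
    hsplit.eq_prod_roots
  set t : Multiset ℝ := W.roots.map (fun z => -z.re) with ht
  have htnn : ∀ r ∈ t, 0 ≤ r := by
    intro r hr
    rw [ht] at hr
    obtain ⟨z, hz, rfl⟩ := Multiset.mem_map.1 hr
    have := (hroots z hz).2
    linarith
  have hcardt : Multiset.card t = n := by
    rw [ht, Multiset.card_map, Polynomial.splits_iff_card_roots.1 hsplit, hWdeg]
  have hEfac : E = Polynomial.C (∏ i, p i 2) * (t.map fun r => X + Polynomial.C r).prod := by
    apply Polynomial.map_injective (algebraMap ℝ ℂ) (algebraMap ℝ ℂ).injective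
    have hrhs : (Polynomial.C (∏ i, p i 2) * (t.map fun r => X + Polynomial.C r).prod).map
          (algebraMap ℝ ℂ)
        = Polynomial.C W.leadingCoeff * (W.roots.map fun z => X - Polynomial.C z).prod := by
      rw [Polynomial.map_mul, Polynomial.map_C, Polynomial.map_multiset_prod,
        Multiset.map_map, ht, Multiset.map_map]
      congr 1
      · rw [hWlc]; simp [Complex.coe_algebraMap]
      · apply congrArg Multiset.prod
        apply Multiset.map_congr rfl
        intro z hz
        have him := (hroots z hz).1
        have hz' : ((z.re : ℝ) : ℂ) = z := by
          apply Complex.ext <;> simp [him]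
        simp only [Function.comp_apply, Polynomial.map_add, Polynomial.map_C,
          Polynomial.map_X, Complex.coe_algebraMap]
        rw [sub_eq_add_neg, ← Polynomial.C_neg]
        congr 1
        push_cast
        rw [hz']
    rw [hrhs, ← hWfac, hW]
  have hEco2 : ∀ j, E.coeff j = (∏ i, p i 2) * useq t j := by
    intro j
    rw [hEfac, Polynomial.coeff_C_mul]
    rfl
  have hcoe : ∀ q, q ≤ n → (Ppoly n p).coeff (2*q) = (∏ i, p i 2) * useq t q := by
    intro q hq
    have h1 : E.coeff q = (Ppoly n p).coeff (2*q) := by rw [hEco q, if_pos hq]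
    rw [← h1, hEco2 q]
  -- final algebra
  obtain ⟨u0, uv, fz, flc⟩ := useq_package t htnn
  obtain ⟨j, rfl⟩ : ∃ j, k = j + 1 := ⟨k - 1, by omega⟩
  obtain ⟨m, rfl⟩ : ∃ m, n = j + 2 + m := ⟨n - (j+2), by omega⟩
  rw [eterm_eq_coeff, eterm_eq_coeff, eterm_eq_coeff]
  simp only [Nat.add_sub_cancel]
  rw [hcoe j (by omega), hcoe (j+1) (by omega), hcoe (j+2) (by omega)]
  have hL := flc j
  rw [fseq, fseq, fseq, hcardt] at hL
  rw [show j+2+m-j = m+2 by omega, show j+2+m-(j+1) = m+1 by omega,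
    show j+2+m-(j+2) = m by omega] at hL
  rw [Nat.factorial_succ (m+1), Nat.factorial_succ m, Nat.factorial_succ (j+1),
    Nat.factorial_succ j] at hL
  push_cast at hL
  have ha : (0:ℝ) < (j.factorial : ℝ) := by exact_mod_cast j.factorial_pos
  have hb : (0:ℝ) < (m.factorial : ℝ) := by exact_mod_cast m.factorial_pos
  have hκ : (0:ℝ) < ((j.factorial : ℝ) * (m.factorial : ℝ))^2 * (((j:ℝ)+1)*((m:ℝ)+1)) := by
    positivity
  have hk2 : ((j:ℝ)+2)*((m:ℝ)+2) * (useq t j * useq t (j+2))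
      ≤ ((j:ℝ)+1)*((m:ℝ)+1) * (useq t (j+1))^2 := by
    nlinarith [hL, hκ]
  have hc1 : (((j+1+1) * (j+2+m-(j+1)+1) : ℕ) : ℝ) = ((j:ℝ)+2)*((m:ℝ)+2) := by
    rw [show j+2+m-(j+1) = m+1 by omega]; push_cast; ring
  have hc2 : (((j+1) * (j+2+m-(j+1)) : ℕ) : ℝ) = ((j:ℝ)+1)*((m:ℝ)+1) := by
    rw [show j+2+m-(j+1) = m+1 by omega]; push_cast; ring
  rw [hc1, hc2]
  nlinarith [hk2, sq_nonneg (∏ i, p i 2), mul_nonneg (u0 j) (u0 (j+2)), u0 (j+1), hlcpos]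

/-- `(u_0, …, u_m)` is ultra-log-concave of order `m`. -/
def ULC (m : ℕ) (u : ℕ → ℝ) : Prop :=
  ∀ k, 1 ≤ k → k + 1 ≤ m →
    ((k * (m - k) : ℕ) : ℝ) * (u k) ^ 2 ≥
      (((k + 1) * (m - k + 1) : ℕ) : ℝ) * u (k - 1) * u (k + 1)

/-- For independent ternary random variables (with pmfs `p i`), the even part of
the law of the sum, `e k = P(S_n = 2k)`, is ULC(n). -/
theorem even_part_ULC (n : ℕ) (p : Fin n → Fin 3 → ℝ)
    (hnn : ∀ i j, 0 ≤ p i j) (hsum : ∀ i, ∑ j, p i j = 1) :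
    ULC n (fun k =>
      ∑ x ∈ Finset.univ.filter (fun x : Fin n → Fin 3 => ∑ i, (x i : ℕ) = 2 * k),
        ∏ i, p i (x i)) := by
  intro k hk1 hkn
  rw [ge_iff_le]
  dsimp only
  have key : ∀ ε : ℝ, 0 < ε →
      0 ≤ ((k * (n - k) : ℕ) : ℝ) *
        (∑ x ∈ Finset.univ.filter (fun x : Fin n → Fin 3 => ∑ i, (x i : ℕ) = 2 * k),
          ∏ i, (p i (x i) + ε))^2
        - (((k + 1) * (n - k + 1) : ℕ) : ℝ) *
        (∑ x ∈ Finset.univ.filter (fun x : Fin n → Fin 3 => ∑ i, (x i : ℕ) = 2 * (k-1)),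
          ∏ i, (p i (x i) + ε)) *
        (∑ x ∈ Finset.univ.filter (fun x : Fin n → Fin 3 => ∑ i, (x i : ℕ) = 2 * (k+1)),
          ∏ i, (p i (x i) + ε)) := by
    intro ε hε
    have h := pos_case n (fun i j => p i j + ε)
      (fun i j => by show 0 < p i j + ε; have := hnn i j; linarith) k hk1 hkn
    have h' : (((k + 1) * (n - k + 1) : ℕ) : ℝ) *
        (∑ x ∈ Finset.univ.filter (fun x : Fin n → Fin 3 => ∑ i, (x i : ℕ) = 2 * (k-1)),
          ∏ i, (p i (x i) + ε)) *
        (∑ x ∈ Finset.univ.filter (fun x : Fin n → Fin 3 => ∑ i, (x i : ℕ) = 2 * (k+1)),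
          ∏ i, (p i (x i) + ε))
        ≤ ((k * (n - k) : ℕ) : ℝ) *
        (∑ x ∈ Finset.univ.filter (fun x : Fin n → Fin 3 => ∑ i, (x i : ℕ) = 2 * k),
          ∏ i, (p i (x i) + ε))^2 := h
    linarith
  have hcont : ∀ q : ℕ, Continuous (fun ε : ℝ =>
      ∑ x ∈ Finset.univ.filter (fun x : Fin n → Fin 3 => ∑ i, (x i : ℕ) = 2 * q),
        ∏ i, (p i (x i) + ε)) := by
    intro q
    apply continuous_finset_sum
    intro x _
    apply continuous_finset_prod
    intro i _
    exact continuous_const.add continuous_id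
  have hφc : Continuous (fun ε : ℝ =>
      ((k * (n - k) : ℕ) : ℝ) *
        (∑ x ∈ Finset.univ.filter (fun x : Fin n → Fin 3 => ∑ i, (x i : ℕ) = 2 * k),
          ∏ i, (p i (x i) + ε))^2
        - (((k + 1) * (n - k + 1) : ℕ) : ℝ) *
        (∑ x ∈ Finset.univ.filter (fun x : Fin n → Fin 3 => ∑ i, (x i : ℕ) = 2 * (k-1)),
          ∏ i, (p i (x i) + ε)) *
        (∑ x ∈ Finset.univ.filter (fun x : Fin n → Fin 3 => ∑ i, (x i : ℕ) = 2 * (k+1)),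
          ∏ i, (p i (x i) + ε))) := by
    apply Continuous.sub
    · exact continuous_const.mul ((hcont k).pow 2)
    · exact (continuous_const.mul (hcont (k-1))).mul (hcont (k+1))
  have h0 := ge_of_tendsto
    (hφc.continuousWithinAt : ContinuousWithinAt _ (Set.Ioi (0:ℝ)) 0)
    (eventually_nhdsWithin_of_forall (fun ε (hε : ε ∈ Set.Ioi (0:ℝ)) => key ε hε))
  simp only [add_zero] at h0
  linarith
end

section
/- For every m ≥ 1, H(B_m) ≥ H(B_{m−1}), where H(B_m) is the Shannon entropy of the binomial distribution Bin(m, 1/2); consequently the weight w_0 = 1/(1 + 2^{H(B_{m−1})−H(B_m)}) satisfies 1/2 ≤ w_0 < 1. -/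
open Finset

/-- Shannon entropy (base 2) of the binomial distribution Bin(m, 1/2). -/
noncomputable def binomEntropy (m : ℕ) : ℝ :=
  (m : ℝ) - ((2 : ℝ) ^ m)⁻¹ *
    ∑ k ∈ Finset.range (m + 1), (Nat.choose m k : ℝ) * Real.logb 2 (Nat.choose m k)

noncomputable def binomS (m : ℕ) : ℝ :=
  ∑ k ∈ Finset.range (m + 1), (Nat.choose m k : ℝ) * Real.logb 2 (Nat.choose m k)

lemma key_concave (a b : ℝ) (ha : 0 ≤ a) (hb : 0 ≤ b) :
    (a + b) * Real.logb 2 (a + b) ≤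
      a * Real.logb 2 a + b * Real.logb 2 b + (a + b) := by
  rcases ha.eq_or_lt with rfl | ha'
  · simp only [zero_add, zero_mul]
    linarith
  rcases hb.eq_or_lt with rfl | hb'
  · simp only [add_zero, zero_mul]
    linarith
  have hlog2 : (0 : ℝ) < Real.log 2 := Real.log_pos (by norm_num)
  have hab : (0 : ℝ) < a + b := by linarith
  -- natural log inequality via log x ≤ x - 1
  have hA : a * Real.log ((a + b) / (2 * a)) ≤ (b - a) / 2 := by
    have h1 := Real.log_le_sub_one_of_pos (show (0:ℝ) < (a + b) / (2 * a) by positivity)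
    have h2 := mul_le_mul_of_nonneg_left h1 ha
    have h3 : a * ((a + b) / (2 * a) - 1) = (b - a) / 2 := by
      field_simp; ring
    linarith
  have hB : b * Real.log ((a + b) / (2 * b)) ≤ (a - b) / 2 := by
    have h1 := Real.log_le_sub_one_of_pos (show (0:ℝ) < (a + b) / (2 * b) by positivity)
    have h2 := mul_le_mul_of_nonneg_left h1 hb
    have h3 : b * ((a + b) / (2 * b) - 1) = (a - b) / 2 := by
      field_simp; ring
    linarith
  have eA : Real.log ((a + b) / (2 * a)) = Real.log (a + b) - (Real.log 2 + Real.log a) := by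
    rw [Real.log_div hab.ne' (by positivity), Real.log_mul (by norm_num) ha'.ne']
  have eB : Real.log ((a + b) / (2 * b)) = Real.log (a + b) - (Real.log 2 + Real.log b) := by
    rw [Real.log_div hab.ne' (by positivity), Real.log_mul (by norm_num) hb'.ne']
  rw [eA] at hA
  rw [eB] at hB
  have hnat : (a + b) * Real.log (a + b) ≤
      a * Real.log a + b * Real.log b + (a + b) * Real.log 2 := by nlinarith
  have key2 : a * Real.logb 2 a + b * Real.logb 2 b + (a + b)
      - (a + b) * Real.logb 2 (a + b)
      = (a * Real.log a + b * Real.log b + (a + b) * Real.log 2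
        - (a + b) * Real.log (a + b)) / Real.log 2 := by
    rw [Real.logb, Real.logb, Real.logb]
    field_simp
  have hpos : (0 : ℝ) ≤ (a * Real.log a + b * Real.log b + (a + b) * Real.log 2
      - (a + b) * Real.log (a + b)) / Real.log 2 :=
    div_nonneg (by linarith) hlog2.le
  linarith [key2 ▸ hpos]

lemma binomS_rec (n : ℕ) : binomS (n + 1) ≤ 2 * binomS n + 2 ^ (n + 1) := by
  have hstep : ∀ k, ((n+1).choose (k+1) : ℝ) * Real.logb 2 ((n+1).choose (k+1)) ≤
      (n.choose k : ℝ) * Real.logb 2 (n.choose k)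
      + (n.choose (k+1) : ℝ) * Real.logb 2 (n.choose (k+1))
      + ((n+1).choose (k+1) : ℝ) := by
    intro k
    have h := key_concave (n.choose k : ℝ) (n.choose (k+1) : ℝ)
      (by positivity) (by positivity)
    have e : ((n+1).choose (k+1) : ℝ) = (n.choose k : ℝ) + (n.choose (k+1) : ℝ) := by
      rw [Nat.choose_succ_succ]; push_cast; ring
    rw [e]
    exact h
  have e1 : binomS (n + 1)
      = ∑ k ∈ Finset.range (n + 1),
          ((n+1).choose (k+1) : ℝ) * Real.logb 2 ((n+1).choose (k+1)) := by
    rw [binomS, Finset.sum_range_succ']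
    simp
  have e2 : ∑ k ∈ Finset.range (n + 1),
      (n.choose (k+1) : ℝ) * Real.logb 2 (n.choose (k+1)) = binomS n := by
    have h1 : ∑ k ∈ Finset.range (n + 2),
        (n.choose k : ℝ) * Real.logb 2 (n.choose k)
        = ∑ k ∈ Finset.range (n + 1),
            (n.choose (k+1) : ℝ) * Real.logb 2 (n.choose (k+1))
          + (n.choose 0 : ℝ) * Real.logb 2 (n.choose 0) := Finset.sum_range_succ' _ _
    have h2 : ∑ k ∈ Finset.range (n + 2),
        (n.choose k : ℝ) * Real.logb 2 (n.choose k)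
        = binomS n + (n.choose (n+1) : ℝ) * Real.logb 2 (n.choose (n+1)) :=
      Finset.sum_range_succ _ _
    rw [h2] at h1
    simp [Nat.choose_succ_self] at h1 ⊢
    linarith
  have e3 : ∑ k ∈ Finset.range (n + 1), ((n+1).choose (k+1) : ℝ) ≤ 2 ^ (n + 1) := by
    have h1 : ∑ k ∈ Finset.range (n + 2), ((n+1).choose k : ℕ) = 2 ^ (n + 1) :=
      Nat.sum_range_choose (n + 1)
    have h2 : ∑ k ∈ Finset.range (n + 2), ((n+1).choose k : ℕ)
        = ∑ k ∈ Finset.range (n + 1), ((n+1).choose (k+1) : ℕ) + (n+1).choose 0 :=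
      Finset.sum_range_succ' _ _
    have h3 : ∑ k ∈ Finset.range (n + 1), ((n+1).choose (k+1) : ℕ) ≤ 2 ^ (n + 1) := by
      omega
    calc ∑ k ∈ Finset.range (n + 1), ((n+1).choose (k+1) : ℝ)
        = ((∑ k ∈ Finset.range (n + 1), ((n+1).choose (k+1) : ℕ) : ℕ) : ℝ) := by push_cast; ring
      _ ≤ ((2 ^ (n+1) : ℕ) : ℝ) := by exact_mod_cast Nat.cast_le.mpr h3
      _ = 2 ^ (n + 1) := by push_cast; ring
  calc binomS (n + 1)
      = ∑ k ∈ Finset.range (n + 1),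
          ((n+1).choose (k+1) : ℝ) * Real.logb 2 ((n+1).choose (k+1)) := e1
    _ ≤ ∑ k ∈ Finset.range (n + 1),
          ((n.choose k : ℝ) * Real.logb 2 (n.choose k)
          + (n.choose (k+1) : ℝ) * Real.logb 2 (n.choose (k+1))
          + ((n+1).choose (k+1) : ℝ)) :=
        Finset.sum_le_sum fun k _ => hstep k
    _ = binomS n + (∑ k ∈ Finset.range (n + 1),
          (n.choose (k+1) : ℝ) * Real.logb 2 (n.choose (k+1)))
        + ∑ k ∈ Finset.range (n + 1), ((n+1).choose (k+1) : ℝ) := by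
        rw [Finset.sum_add_distrib, Finset.sum_add_distrib, binomS]
    _ ≤ binomS n + binomS n + 2 ^ (n + 1) := by rw [e2]; linarith [e3]
    _ = 2 * binomS n + 2 ^ (n + 1) := by ring

lemma binomEntropy_step (n : ℕ) : binomEntropy n ≤ binomEntropy (n + 1) := by
  have h := binomS_rec n
  have hp : (0 : ℝ) < 2 ^ (n + 1) := by positivity
  have hmul := mul_le_mul_of_nonneg_left h (inv_nonneg.mpr hp.le)
  have e : ((2:ℝ) ^ (n+1))⁻¹ * (2 * binomS n + 2 ^ (n+1))
      = ((2:ℝ) ^ n)⁻¹ * binomS n + 1 := by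
    rw [pow_succ]
    field_simp
  rw [e] at hmul
  show (n : ℝ) - ((2:ℝ)^n)⁻¹ * binomS n ≤ ((n+1 : ℕ) : ℝ) - ((2:ℝ)^(n+1))⁻¹ * binomS (n+1)
  push_cast
  linarith

/-- `H(Bₘ) ≥ H(Bₘ₋₁)` for `m ≥ 1`; consequently
`w₀ = 1/(1 + 2^{H(Bₘ₋₁) − H(Bₘ)})` satisfies `1/2 ≤ w₀ < 1`. -/
theorem binomEntropy_monotone (m : ℕ) (hm : 1 ≤ m) :
    binomEntropy (m - 1) ≤ binomEntropy m ∧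
    (1 / 2 : ℝ) ≤ 1 / (1 + (2 : ℝ) ^ (binomEntropy (m - 1) - binomEntropy m)) ∧
    1 / (1 + (2 : ℝ) ^ (binomEntropy (m - 1) - binomEntropy m)) < 1 := by
  obtain ⟨n, rfl⟩ : ∃ n, m = n + 1 := ⟨m - 1, by omega⟩
  have h1 : binomEntropy (n + 1 - 1) ≤ binomEntropy (n + 1) := by
    simpa using binomEntropy_step n
  refine ⟨h1, ?_, ?_⟩
  · have hd : binomEntropy (n + 1 - 1) - binomEntropy (n + 1) ≤ 0 := by linarith
    have hle : (2 : ℝ) ^ (binomEntropy (n + 1 - 1) - binomEntropy (n + 1)) ≤ 1 :=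
      Real.rpow_le_one_of_one_le_of_nonpos (by norm_num) hd
    have hpos : (0 : ℝ) < (2 : ℝ) ^ (binomEntropy (n + 1 - 1) - binomEntropy (n + 1)) :=
      Real.rpow_pos_of_pos (by norm_num) _
    rw [div_le_div_iff₀ (by norm_num) (by linarith)]
    linarith
  · have hpos : (0 : ℝ) < (2 : ℝ) ^ (binomEntropy (n + 1 - 1) - binomEntropy (n + 1)) :=
      Real.rpow_pos_of_pos (by norm_num) _
    rw [div_lt_one (by linarith)]
    linarith
end
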